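/- arXiv:1602.08446 — 11 statements merged into one kernel-verified Lean document; each statement's English description precedes it below -/
import Mathlib

section
/- The function f(x) = d / log₂(1 + p·g / (q·h·x + σ²)) for positive constants d, p, g, q, h, σ² is concave in x on [0, ∞). -/
open Real Set

/-- Key inequality: `2r ≤ (2+r) log(1+r)` for `r ≥ 0`. -/
lemma ue_key_ineq {r : ℝ} (hr : 0 ≤ r) : 2 * r ≤ (2 + r) * Real.log (1 + r) := by
  have hder : ∀ x : ℝ, -1 < x →
      HasDerivAt (fun x : ℝ => (2 + x) * Real.log (1 + x) - 2 * x)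
        (1 * Real.log (1 + x) + (2 + x) * (1 / (1 + x)) - 2) x := by
    intro x hx
    have h1 : HasDerivAt (fun x : ℝ => 1 + x) 1 x := (hasDerivAt_id x).const_add 1
    have hne : (1 : ℝ) + x ≠ 0 := by intro h; linarith
    have h2 : HasDerivAt (fun x : ℝ => Real.log (1 + x)) (1 / (1 + x)) x := h1.log hne
    have h3 : HasDerivAt (fun x : ℝ => 2 + x) 1 x := (hasDerivAt_id x).const_add 2
    have h4 := (h3.mul h2).sub ((hasDerivAt_id x).const_mul 2)
    have h5 : HasDerivAt (fun x : ℝ => (2 + x) * Real.log (1 + x) - 2 * x) _ x := h4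
    simpa using h5
  have hmono : MonotoneOn (fun x : ℝ => (2 + x) * Real.log (1 + x) - 2 * x) (Ici 0) := by
    apply monotoneOn_of_deriv_nonneg (convex_Ici 0)
    · intro x hx
      have hx0 : (0:ℝ) ≤ x := hx
      exact ((hder x (by linarith)).differentiableAt.continuousAt).continuousWithinAt
    · intro x hx
      rw [interior_Ici] at hx
      exact ((hder x (by linarith [mem_Ioi.mp hx])).differentiableAt).differentiableWithinAt
    · intro x hx
      rw [interior_Ici] at hx
      have hxpos : (0:ℝ) < x := hx
      rw [(hder x (by linarith)).deriv]
      have hx1 : (0:ℝ) < 1 + x := by linarith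
      have hlog : Real.log (1 + x) ≥ x / (1 + x) := by
        have hlin := Real.log_le_sub_one_of_pos (x := (1 + x)⁻¹) (by positivity)
        rw [Real.log_inv] at hlin
        have heq : (1 + x)⁻¹ - 1 = -(x / (1 + x)) := by field_simp; ring
        rw [heq] at hlin
        linarith
      have h2 : (2 + x) * (1 / (1 + x)) = 2 - x / (1 + x) := by
        field_simp
        ring
      rw [h2]
      linarith
  have hres := hmono self_mem_Ici (mem_Ici.mpr hr) hr
  have h0 : (2 + (0:ℝ)) * Real.log (1 + 0) - 2 * 0 = 0 := by simp
  dsimp only at hres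
  rw [h0] at hres
  linarith

/-- Auxiliary: concavity of `K / (log(a x + b + c) - log(a x + b))` on `[0, ∞)`. -/
lemma ue_aux_concave (a b c K : ℝ) (ha : 0 < a) (hb : 0 < b) (hc : 0 < c) (hK : 0 < K) :
    ConcaveOn ℝ (Set.Ici 0)
      (fun x : ℝ => K / (Real.log (a * x + b + c) - Real.log (a * x + b))) := by
  have hspos : ∀ x : ℝ, 0 ≤ x → 0 < a * x + b := fun x hx => by nlinarith
  have hscpos : ∀ x : ℝ, 0 ≤ x → 0 < a * x + b + c := fun x hx => by nlinarith
  have hVpos : ∀ x : ℝ, 0 ≤ x →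
      0 < Real.log (a * x + b + c) - Real.log (a * x + b) := by
    intro x hx
    have := Real.log_lt_log (hspos x hx) (by linarith : a * x + b < a * x + b + c)
    linarith
  apply concaveOn_of_hasDerivWithinAt2_nonpos (convex_Ici 0)
    (f' := fun x : ℝ => -K * (a / (a * x + b + c) - a / (a * x + b)) /
        (Real.log (a * x + b + c) - Real.log (a * x + b)) ^ 2)
    (f'' := fun x : ℝ =>
        (-K * (a ^ 2 / (a * x + b) ^ 2 - a ^ 2 / (a * x + b + c) ^ 2) *
            (Real.log (a * x + b + c) - Real.log (a * x + b)) ^ 2 +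
          K * (a / (a * x + b + c) - a / (a * x + b)) *
            (2 * (Real.log (a * x + b + c) - Real.log (a * x + b)) *
              (a / (a * x + b + c) - a / (a * x + b)))) /
          (Real.log (a * x + b + c) - Real.log (a * x + b)) ^ 4)
  · -- continuity
    apply ContinuousOn.div continuousOn_const
    · apply ContinuousOn.sub
      · exact ContinuousOn.log (by fun_prop) (fun x hx => (hscpos x hx).ne')
      · exact ContinuousOn.log (by fun_prop) (fun x hx => (hspos x hx).ne')
    · intro x hx
      exact (hVpos x hx).ne'
  · -- first derivative
    intro x hx
    rw [interior_Ici] at hx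
    have hx0 : (0:ℝ) ≤ x := le_of_lt hx
    have hs := hspos x hx0
    have hsc := hscpos x hx0
    have hV := hVpos x hx0
    have hw : HasDerivAt (fun y : ℝ => a * y + b) a x := by
      simpa using ((hasDerivAt_id x).const_mul a).add_const b
    have hl1 : HasDerivAt (fun y : ℝ => Real.log (a * y + b + c)) (a / (a * x + b + c)) x :=
      (hw.add_const c).log hsc.ne'
    have hl2 : HasDerivAt (fun y : ℝ => Real.log (a * y + b)) (a / (a * x + b)) x :=
      hw.log hs.ne'
    have hv : HasDerivAt (fun y : ℝ => Real.log (a * y + b + c) - Real.log (a * y + b))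
        (a / (a * x + b + c) - a / (a * x + b)) x := hl1.sub hl2
    have hF := (hasDerivAt_const x K).fun_div hv hV.ne'
    have : HasDerivAt (fun y : ℝ => K / (Real.log (a * y + b + c) - Real.log (a * y + b)))
        (-K * (a / (a * x + b + c) - a / (a * x + b)) /
          (Real.log (a * x + b + c) - Real.log (a * x + b)) ^ 2) x := by
      exact hF.congr_deriv (by ring)
    exact this.hasDerivWithinAt
  · -- second derivative
    intro x hx
    rw [interior_Ici] at hx
    have hx0 : (0:ℝ) ≤ x := le_of_lt hx
    have hs := hspos x hx0
    have hsc := hscpos x hx0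
    have hV := hVpos x hx0
    have hw : HasDerivAt (fun y : ℝ => a * y + b) a x := by
      simpa using ((hasDerivAt_id x).const_mul a).add_const b
    have hl1 : HasDerivAt (fun y : ℝ => Real.log (a * y + b + c)) (a / (a * x + b + c)) x :=
      (hw.add_const c).log hsc.ne'
    have hl2 : HasDerivAt (fun y : ℝ => Real.log (a * y + b)) (a / (a * x + b)) x :=
      hw.log hs.ne'
    have hv : HasDerivAt (fun y : ℝ => Real.log (a * y + b + c) - Real.log (a * y + b))
        (a / (a * x + b + c) - a / (a * x + b)) x := hl1.sub hl2
    -- derivative of a / (a*y + b + c)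
    have hq1 : HasDerivAt (fun y : ℝ => a / (a * y + b + c))
        (-(a ^ 2) / (a * x + b + c) ^ 2) x := by
      have := (hasDerivAt_const x a).fun_div (hw.add_const c) hsc.ne'
      exact this.congr_deriv (by ring)
    have hq2 : HasDerivAt (fun y : ℝ => a / (a * y + b))
        (-(a ^ 2) / (a * x + b) ^ 2) x := by
      have := (hasDerivAt_const x a).fun_div hw hs.ne'
      exact this.congr_deriv (by ring)
    have hv1 : HasDerivAt (fun y : ℝ => a / (a * y + b + c) - a / (a * y + b))
        (a ^ 2 / (a * x + b) ^ 2 - a ^ 2 / (a * x + b + c) ^ 2) x := by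
      have : HasDerivAt (fun y : ℝ => a / (a * y + b + c) - a / (a * y + b)) _ x := hq1.sub hq2
      convert this using 1; ring
    -- numerator of f'
    have hN : HasDerivAt (fun y : ℝ => -K * (a / (a * y + b + c) - a / (a * y + b)))
        (-K * (a ^ 2 / (a * x + b) ^ 2 - a ^ 2 / (a * x + b + c) ^ 2)) x :=
      hv1.const_mul (-K)
    -- denominator of f'
    have hD : HasDerivAt
        (fun y : ℝ => (Real.log (a * y + b + c) - Real.log (a * y + b)) ^ 2)
        (2 * (Real.log (a * x + b + c) - Real.log (a * x + b)) *
          (a / (a * x + b + c) - a / (a * x + b))) x := by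
      have : HasDerivAt (fun y : ℝ => (Real.log (a * y + b + c) - Real.log (a * y + b)) ^ 2) _ x :=
        hv.pow 2
      convert this using 1; push_cast; ring
    have hDne : (Real.log (a * x + b + c) - Real.log (a * x + b)) ^ 2 ≠ 0 := by positivity
    have hF1 := hN.fun_div hD hDne
    have : HasDerivAt (fun y : ℝ => -K * (a / (a * y + b + c) - a / (a * y + b)) /
        (Real.log (a * y + b + c) - Real.log (a * y + b)) ^ 2)
        ((-K * (a ^ 2 / (a * x + b) ^ 2 - a ^ 2 / (a * x + b + c) ^ 2) *
            (Real.log (a * x + b + c) - Real.log (a * x + b)) ^ 2 +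
          K * (a / (a * x + b + c) - a / (a * x + b)) *
            (2 * (Real.log (a * x + b + c) - Real.log (a * x + b)) *
              (a / (a * x + b + c) - a / (a * x + b)))) /
          (Real.log (a * x + b + c) - Real.log (a * x + b)) ^ 4) x := by
      exact hF1.congr_deriv (by ring)
    exact this.hasDerivWithinAt
  · -- nonpositivity of second derivative
    intro x hx
    rw [interior_Ici] at hx
    have hx0 : (0:ℝ) ≤ x := le_of_lt hx
    have hV := hVpos x hx0
    set s : ℝ := a * x + b with hsdef
    have hs : 0 < s := hspos x hx0
    have hsc : 0 < s + c := by
      have := hscpos x hx0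
      rw [hsdef]; linarith [this]
    set L : ℝ := Real.log (s + c) - Real.log s with hLdef
    have hL : 0 < L := hV
    -- key: 2c ≤ (2s + c) L
    have hkey : 2 * c ≤ (2 * s + c) * L := by
      have h1 := ue_key_ineq (le_of_lt (div_pos hc hs))
      have h2 : (1 : ℝ) + c / s = (s + c) / s := by field_simp
      have h3 : Real.log ((s + c) / s) = Real.log (s + c) - Real.log s :=
        Real.log_div hsc.ne' hs.ne'
      rw [h2, h3, ← hLdef] at h1
      have h4 := mul_le_mul_of_nonneg_right h1 hs.le
      have he : (2 + c / s) * L * s = (2 * s + c) * L := by field_simp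
      have he2 : 2 * (c / s) * s = 2 * c := by field_simp
      rw [he, he2] at h4
      exact h4
    -- reduce to polynomial inequality
    have hineq : 2 * (a / (s + c) - a / s) ^ 2 ≤
        (a ^ 2 / s ^ 2 - a ^ 2 / (s + c) ^ 2) * L := by
      have e1 : a / (s + c) - a / s = -(a * c) / (s * (s + c)) := by
        field_simp; ring
      have e2 : a ^ 2 / s ^ 2 - a ^ 2 / (s + c) ^ 2
          = (a ^ 2 * c * (2 * s + c)) / (s * (s + c)) ^ 2 := by
        field_simp; ring
      have e3 : 2 * (-(a * c) / (s * (s + c))) ^ 2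
          = (2 * (a * c) ^ 2) / (s * (s + c)) ^ 2 := by
        rw [div_pow]; ring
      have e4 : (a ^ 2 * c * (2 * s + c)) / (s * (s + c)) ^ 2 * L
          = (a ^ 2 * c * (2 * s + c) * L) / (s * (s + c)) ^ 2 := by
        ring
      rw [e1, e2, e3, e4, div_le_div_iff_of_pos_right (by positivity)]
      nlinarith [mul_le_mul_of_nonneg_left hkey
        (by positivity : (0:ℝ) ≤ a ^ 2 * c)]
    have h5 : 0 ≤ K * L *
        ((a ^ 2 / s ^ 2 - a ^ 2 / (s + c) ^ 2) * L
          - 2 * (a / (s + c) - a / s) ^ 2) :=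
      mul_nonneg (mul_pos hK hL).le (by linarith)
    apply div_nonpos_of_nonpos_of_nonneg
    · nlinarith [h5]
    · positivity

theorem ue_load_concave (d p g q h σsq : ℝ)
    (hd : 0 < d) (hp : 0 < p) (hg : 0 < g) (hq : 0 < q) (hh : 0 < h)
    (hσ : 0 < σsq) :
    ConcaveOn ℝ (Set.Ici 0)
      (fun x : ℝ => d / Real.logb 2 (1 + p * g / (q * h * x + σsq))) := by
  have hK : 0 < d * Real.log 2 := mul_pos hd (Real.log_pos one_lt_two)
  have haux := ue_aux_concave (q * h) σsq (p * g) (d * Real.log 2)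
    (mul_pos hq hh) hσ (mul_pos hp hg) hK
  apply haux.congr
  intro x hx
  have hx0 : (0:ℝ) ≤ x := hx
  have hs : 0 < q * h * x + σsq := by nlinarith [mul_pos hq hh]
  have hsc : 0 < q * h * x + σsq + p * g := by nlinarith [mul_pos hp hg]
  have h1 : 1 + p * g / (q * h * x + σsq) = (q * h * x + σsq + p * g) / (q * h * x + σsq) := by
    field_simp
  simp only [h1, Real.logb, Real.log_div hsc.ne' hs.ne']
  rw [div_div_eq_mul_div]
end

section
/- Let f : ℝ≥0 → ℝ be given by f(x) = d / log₂(1 + p·g / (q·h·x + σ²)) with all constants positive. Then f satisfies scalability: for all x ≥ 0 and α > 1, α·f(x) > f(α·x). -/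
theorem ue_load_scalable (d p g q h σsq : ℝ)
    (hd : 0 < d) (hp : 0 < p) (hg : 0 < g) (hq : 0 < q) (hh : 0 < h)
    (hσ : 0 < σsq) :
    ∀ x : ℝ, 0 ≤ x → ∀ α : ℝ, 1 < α →
      α * (d / Real.logb 2 (1 + p * g / (q * h * x + σsq))) >
        d / Real.logb 2 (1 + p * g / (q * h * (α * x) + σsq)) := by
  intro x hx α hα
  have hpg : 0 < p * g := mul_pos hp hg
  have hden1 : 0 < q * h * x + σsq := by positivity
  have hden2 : 0 < q * h * (α * x) + σsq := by positivity
  set S1 := p * g / (q * h * x + σsq) with hS1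
  set S2 := p * g / (q * h * (α * x) + σsq) with hS2
  have hS1pos : 0 < S1 := div_pos hpg hden1
  have hS2pos : 0 < S2 := div_pos hpg hden2
  have hL1 : 0 < Real.logb 2 (1 + S1) := Real.logb_pos one_lt_two (by linarith)
  have hL2 : 0 < Real.logb 2 (1 + S2) := Real.logb_pos one_lt_two (by linarith)
  -- key: S1 < α * S2
  have hkey : S1 < α * S2 := by
    rw [hS1, hS2, mul_div_assoc', div_lt_div_iff₀ hden1 hden2]
    have hx' : 0 ≤ q * h * x := by positivity
    nlinarith [mul_pos hpg hσ]
  -- hence 1 + S1 < (1 + S2)^α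
  have hbern : 1 + α * S2 ≤ (1 + S2) ^ α :=
    one_add_mul_self_le_rpow_one_add (by linarith) hα.le
  have hlt : 1 + S1 < (1 + S2) ^ α := by linarith
  have hlog : Real.logb 2 (1 + S1) < α * Real.logb 2 (1 + S2) := by
    have := Real.logb_lt_logb one_lt_two (by linarith : (0:ℝ) < 1 + S1) hlt
    rwa [Real.logb_rpow_eq_mul_logb_of_pos (by linarith)] at this
  rw [gt_iff_lt, div_lt_iff₀ hL2, mul_comm α, mul_assoc, div_mul_eq_mul_div,
    lt_div_iff₀ hL1]
  nlinarith
end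

section
/- Any concave function f : ℝ₊ → ℝ with f(0) > 0 that is nonnegative and monotonically nondecreasing satisfies the scalability property: for all x ≥ 0 and all α > 1, α·f(x) > f(α·x). -/
theorem concave_positive_monotone_scalable (f : ℝ → ℝ)
    (hconc : ConcaveOn ℝ (Set.Ici 0) f)
    (h0 : 0 < f 0)
    (hnonneg : ∀ x ∈ Set.Ici (0 : ℝ), 0 ≤ f x)
    (hmono : MonotoneOn f (Set.Ici 0)) :
    ∀ x : ℝ, 0 ≤ x → ∀ α : ℝ, 1 < α → α * f x > f (α * x) := by
  intro x hx α hα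
  have hα0 : (0:ℝ) < α := lt_trans one_pos hα
  have ha : (0:ℝ) ≤ 1/α := by positivity
  have hb : (0:ℝ) ≤ 1 - 1/α := by
    have : 1/α < 1 := by
      rw [div_lt_one hα0]; exact hα
    linarith
  have hab : 1/α + (1 - 1/α) = 1 := by ring
  have hmem : α * x ∈ Set.Ici (0:ℝ) := by
    have : 0 ≤ α * x := by positivity
    simpa using this
  have hmem0 : (0:ℝ) ∈ Set.Ici (0:ℝ) := Set.self_mem_Ici
  have key := hconc.2 hmem hmem0 ha hb hab
  have heq : (1/α) • (α * x) + (1 - 1/α) • (0:ℝ) = x := by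
    simp only [smul_eq_mul]; field_simp; ring
  rw [heq] at key
  have : (1/α) * f (α * x) + (1 - 1/α) * f 0 ≤ f x := by
    simpa [smul_eq_mul] using key
  have hb' : 0 < 1 - 1/α := by
    have : 1/α < 1 := by rw [div_lt_one hα0]; exact hα
    linarith
  have h2 : (1/α) * f (α * x) < f x := by nlinarith
  have := (div_lt_iff₀ hα0).mp (by simpa [div_eq_mul_inv, mul_comm] using h2 : f (α * x) / α < f x)
  linarith
end

section
/- Let f : ℝⁿ₊ → ℝⁿ₊₊ be a standard interference function (monotone and scalable). If there exists x' ∈ ℝⁿ₊ with f(x') ≤ x' (componentwise), then f has a fixed point in ℝⁿ₊. -/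
theorem sif_fixed_point_exists (n : ℕ) (f : (Fin n → ℝ) → (Fin n → ℝ))
    (hpos : ∀ x : Fin n → ℝ, 0 ≤ x → ∀ i, 0 < f x i)
    (hmono : ∀ x y : Fin n → ℝ, 0 ≤ x → 0 ≤ y → x ≤ y → f x ≤ f y)
    (hscal : ∀ x : Fin n → ℝ, 0 ≤ x → ∀ α : ℝ, 1 < α →
      ∀ i, f (α • x) i < α * f x i)
    (hcont : Continuous f)
    (hfeas : ∃ x' : Fin n → ℝ, 0 ≤ x' ∧ f x' ≤ x') :
    ∃ x : Fin n → ℝ, 0 ≤ x ∧ f x = x := by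
  obtain ⟨x', hx'0, hx'f⟩ := hfeas
  -- iterate sequence
  set g : ℕ → (Fin n → ℝ) := fun k => f^[k] x' with hg
  have hstep : ∀ k, g (k + 1) = f (g k) := by
    intro k; simp [hg, Function.iterate_succ_apply']
  have hnn : ∀ k, 0 ≤ g k := by
    intro k
    induction k with
    | zero => simpa [hg] using hx'0
    | succ k ih =>
      rw [hstep]
      intro i
      exact (hpos (g k) ih i).le
  have hdec : ∀ k, g (k + 1) ≤ g k := by
    intro k
    induction k with
    | zero => simpa [hg, Function.iterate_succ_apply'] using hx'f
    | succ k ih =>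
      rw [hstep, hstep]
      exact hmono _ _ (hstep k ▸ hnn (k + 1)) (hnn k) (hstep k ▸ ih)
  have hanti : Antitone g := antitone_nat_of_succ_le hdec
  -- componentwise limit
  set x : Fin n → ℝ := fun i => ⨅ k, g k i with hx
  have hbdd : ∀ i, BddBelow (Set.range fun k => g k i) := by
    intro i
    exact ⟨0, by rintro _ ⟨k, rfl⟩; exact hnn k i⟩
  have hx0 : 0 ≤ x := by
    intro i
    exact le_ciInf fun k => hnn k i
  have htend : Filter.Tendsto g Filter.atTop (nhds x) := by
    rw [tendsto_pi_nhds]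
    intro i
    exact tendsto_atTop_ciInf (fun a b hab => hanti hab i) (hbdd i)
  have htend' : Filter.Tendsto (fun k => g (k + 1)) Filter.atTop (nhds x) :=
    htend.comp (Filter.tendsto_add_atTop_nat 1)
  have htendf : Filter.Tendsto (fun k => f (g k)) Filter.atTop (nhds (f x)) :=
    (hcont.tendsto x).comp htend
  have : f x = x := by
    refine tendsto_nhds_unique ?_ htend'
    simpa [hstep] using htendf
  exact ⟨x, hx0, this⟩
end

section
/- Let f : ℝⁿ₊ → ℝⁿ₊₊ be a standard interference function (monotone and scalable). Then f has at most one fixed point. -/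
theorem sif_fixed_point_unique (n : ℕ) (f : (Fin n → ℝ) → (Fin n → ℝ))
    (hpos : ∀ x : Fin n → ℝ, 0 ≤ x → ∀ i, 0 < f x i)
    (hmono : ∀ x y : Fin n → ℝ, 0 ≤ x → 0 ≤ y → x ≤ y → f x ≤ f y)
    (hscal : ∀ x : Fin n → ℝ, 0 ≤ x → ∀ α : ℝ, 1 < α →
      ∀ i, f (α • x) i < α * f x i) :
    ∀ x y : Fin n → ℝ, 0 ≤ x → 0 ≤ y → f x = x → f y = y → x = y := by
  have key : ∀ x y : Fin n → ℝ, 0 ≤ x → 0 ≤ y → f x = x → f y = y → y ≤ x := by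
    intro x y hx hy hfx hfy
    rcases Nat.eq_zero_or_pos n with hn | hn
    · subst hn; intro i; exact absurd i.2 (by omega)
    have hxpos : ∀ i, 0 < x i := fun i => hfx ▸ hpos x hx i
    have hne : (Finset.univ : Finset (Fin n)).Nonempty := by
      simpa [Finset.univ_nonempty_iff] using Fin.pos_iff_nonempty.mp hn
    have hne2 : (Finset.univ.image fun i => y i / x i).Nonempty := hne.image _
    set α := Finset.max' (Finset.univ.image fun i => y i / x i) hne2 with hα
    obtain ⟨j, -, hj⟩ := Finset.mem_image.mp (Finset.max'_mem _ hne2)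
    have hle : ∀ i, y i / x i ≤ α := fun i =>
      Finset.le_max' _ _ (Finset.mem_image_of_mem (fun i => y i / x i) (Finset.mem_univ i))
    have hyle : ∀ i, y i ≤ α * x i := fun i =>
      (div_le_iff₀ (hxpos i)).mp (hle i)
    by_cases h1 : α ≤ 1
    · intro i
      calc y i ≤ α * x i := hyle i
        _ ≤ 1 * x i := by nlinarith [hxpos i]
        _ = x i := one_mul _
    · exfalso
      push_neg at h1
      have hyj : y j = α * x j := by
        rw [← hα] at hj; exact (div_eq_iff (hxpos j).ne').mp hj
      have hax : (0:Fin n → ℝ) ≤ α • x := fun i => by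
        have := (hxpos i).le
        simp only [Pi.smul_apply, smul_eq_mul, Pi.zero_apply]
        nlinarith
      have h2 : f y j ≤ f (α • x) j := hmono y (α • x) hy hax (fun i => by
        simpa using hyle i) j
      have h3 : f (α • x) j < α * f x j := hscal x hx α h1 j
      rw [hfy] at h2
      rw [hfx] at h3
      nlinarith
  intro x y hx hy hfx hfy
  exact le_antisymm (key y x hy hx hfy hfx) (key x y hx hy hfx hfy)
end

section
/- Suppose κ' is obtained from κ by flipping one entry κ_{cj} from 0 to 1 (cell c newly serves UE j). Then for every load vector x ∈ ℝⁿ₊ and every cell i ≠ c, (f^{κ'} ∘ h^{κ'})_i(x) = (f ∘ h^{κ'})_i(x) ≤ (f ∘ h^κ)_i(x). -/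
/-- SINR of UE j under JT pattern κ and load vector x. -/
noncomputable def hSINR (n m : ℕ) (p : Fin n → ℝ) (g : Fin n → Fin m → ℝ)
    (σsq : ℝ) (κ : Fin n → Fin m → Bool) (x : Fin n → ℝ) (j : Fin m) : ℝ :=
  (∑ i, if κ i j then p i * g i j else 0) /
    ((∑ k, if κ k j then 0 else p k * g k j * x k) + σsq)

/-- Load of cell i given SINR vector γ, pattern κ and demands d. -/
noncomputable def fCell (n m : ℕ) (d : Fin m → ℝ) (κ : Fin n → Fin m → Bool)
    (γ : Fin m → ℝ) (i : Fin n) : ℝ :=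
  ∑ j, if κ i j then d j / Real.logb 2 (1 + γ j) else 0

theorem add_jt_link_other_cells_decrease (n m : ℕ) (p : Fin n → ℝ)
    (g : Fin n → Fin m → ℝ) (σsq : ℝ) (d : Fin m → ℝ)
    (hp : ∀ i, 0 < p i) (hg : ∀ i j, 0 < g i j) (hσ : 0 < σsq)
    (hd : ∀ j, 0 < d j)
    (κ κ' : Fin n → Fin m → Bool) (c : Fin n) (j : Fin m)
    (hflip₀ : κ c j = false) (hflip₁ : κ' c j = true)
    (hsame : ∀ i' j', (i', j') ≠ (c, j) → κ' i' j' = κ i' j') :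
    ∀ x : Fin n → ℝ, (∀ i, 0 ≤ x i) → ∀ i : Fin n, i ≠ c →
      fCell n m d κ' (hSINR n m p g σsq κ' x) i =
        fCell n m d κ (hSINR n m p g σsq κ' x) i ∧
      fCell n m d κ (hSINR n m p g σsq κ' x) i ≤
        fCell n m d κ (hSINR n m p g σsq κ x) i := by
  intro x hx i hic
  have hsame_i : ∀ j', κ' i j' = κ i j' := fun j' =>
    hsame i j' (by simp [hic])
  constructor
  · simp only [fCell, hsame_i]
  · unfold fCell
    apply Finset.sum_le_sum
    intro j' _
    by_cases hij : κ i j' = true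
    · simp only [hij, if_true]
      by_cases hjj : j' = j
      · subst hjj
        -- the interesting case: SINR of j improves
        set num := ∑ k, if κ k j' then p k * g k j' else 0 with hnum
        set num' := ∑ k, if κ' k j' then p k * g k j' else 0 with hnum'
        set den := (∑ k, if κ k j' then 0 else p k * g k j' * x k) + σsq with hden
        set den' := (∑ k, if κ' k j' then 0 else p k * g k j' * x k) + σsq with hden'
        have hnum_le : num ≤ num' := by
          apply Finset.sum_le_sum
          intro k _
          by_cases hk : k = c
          · subst hk
            simp only [hflip₀, hflip₁]
            simp
            exact le_of_lt (mul_pos (hp _) (hg _ _))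
          · rw [hsame k j' (by simp [hk])]
        have hden'_le : den' ≤ den := by
          refine add_le_add ?_ le_rfl
          apply Finset.sum_le_sum
          intro k _
          by_cases hk : k = c
          · subst hk
            simp only [hflip₀, hflip₁]
            simp
            exact mul_nonneg (le_of_lt (mul_pos (hp _) (hg _ _))) (hx _)
          · rw [hsame k j' (by simp [hk])]
        have hden'_pos : 0 < den' := by
          apply add_pos_of_nonneg_of_pos _ hσ
          apply Finset.sum_nonneg
          intro k _
          by_cases h : κ' k j'
          · simp [h]
          · simp [h]
            exact mul_nonneg (le_of_lt (mul_pos (hp _) (hg _ _))) (hx _)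
        have hden_pos : 0 < den := lt_of_lt_of_le hden'_pos hden'_le
        have hnum_pos : 0 < num := by
          have h1 : (if κ i j' then p i * g i j' else 0) ≤ num := by
            apply Finset.single_le_sum (f := fun k => if κ k j' then p k * g k j' else 0)
              (fun k _ => ?_) (Finset.mem_univ i)
            by_cases h : κ k j'
            · simp [h]
              exact le_of_lt (mul_pos (hp _) (hg _ _))
            · simp [h]
          rw [hij, if_pos rfl] at h1
          exact lt_of_lt_of_le (mul_pos (hp i) (hg i j')) h1
        have hγ : hSINR n m p g σsq κ x j' ≤ hSINR n m p g σsq κ' x j' := by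
          simp only [hSINR, ← hnum, ← hnum', ← hden, ← hden']
          exact div_le_div₀ (le_trans hnum_pos.le hnum_le) hnum_le hden'_pos hden'_le
        have hγpos : 0 < hSINR n m p g σsq κ x j' := by
          simp only [hSINR, ← hnum, ← hden]
          exact div_pos hnum_pos hden_pos
        have hlog_pos : 0 < Real.logb 2 (1 + hSINR n m p g σsq κ x j') :=
          Real.logb_pos one_lt_two (by linarith)
        have hlog_le : Real.logb 2 (1 + hSINR n m p g σsq κ x j') ≤
            Real.logb 2 (1 + hSINR n m p g σsq κ' x j') :=
          Real.logb_le_logb_of_le one_lt_two (by linarith) (by linarith)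
        exact div_le_div_of_nonneg_left (hd j').le hlog_pos hlog_le
      · have heq : hSINR n m p g σsq κ' x j' = hSINR n m p g σsq κ x j' := by
          have : ∀ k, κ' k j' = κ k j' := fun k => hsame k j' (by simp [hjj])
          simp only [hSINR, this]
        rw [heq]
    · simp [hij]
end

section
/- (Sufficient condition for load reduction by adding a JT link.) Suppose κ' is obtained from κ by flipping κ_{cj} from 0 to 1. Let x̃ be the fixed point of f^κ ∘ h^κ and define the sequence x^(0) = x̃, x^(k) = f^κ ∘ h^{κ'}(x^(k−1)). If there exists k ≥ 1 such that (f^{κ'} ∘ h^{κ'})_c(x^(k)) ≤ x^(k)_c, then the fixed point x of f^{κ'} ∘ h^{κ'} satisfies x ≤ x̃ componentwise. -/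
/-- The load coupling map f^κ ∘ h^κ. -/
noncomputable def Φ (n m : ℕ) (p : Fin n → ℝ) (g : Fin n → Fin m → ℝ)
    (σsq : ℝ) (d : Fin m → ℝ) (κ : Fin n → Fin m → Bool)
    (x : Fin n → ℝ) : Fin n → ℝ :=
  fCell n m d κ (hSINR n m p g σsq κ x)

section Aux

variable {n m : ℕ} {p : Fin n → ℝ} {g : Fin n → Fin m → ℝ} {σsq : ℝ} {d : Fin m → ℝ}

lemma numer_nonneg (hp : ∀ i, 0 < p i) (hg : ∀ i j, 0 < g i j)
    (κ : Fin n → Fin m → Bool) (j : Fin m) :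
    0 ≤ ∑ i, if κ i j then p i * g i j else 0 := by
  refine Finset.sum_nonneg fun i _ => ?_
  split
  · exact le_of_lt (mul_pos (hp i) (hg i j))
  · exact le_rfl

lemma numer_pos (hp : ∀ i, 0 < p i) (hg : ∀ i j, 0 < g i j)
    (κ : Fin n → Fin m → Bool) {j : Fin m} {i₀ : Fin n} (hi₀ : κ i₀ j = true) :
    0 < ∑ i, if κ i j then p i * g i j else 0 := by
  refine Finset.sum_pos' (fun i _ => ?_) ⟨i₀, Finset.mem_univ _, ?_⟩
  · split
    · exact le_of_lt (mul_pos (hp i) (hg i j))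
    · exact le_rfl
  · simp only [hi₀, if_true]
    exact mul_pos (hp i₀) (hg i₀ j)

lemma denom_pos (hp : ∀ i, 0 < p i) (hg : ∀ i j, 0 < g i j) (hσ : 0 < σsq)
    (κ : Fin n → Fin m → Bool) {x : Fin n → ℝ} (hx : 0 ≤ x) (j : Fin m) :
    0 < (∑ k, if κ k j then 0 else p k * g k j * x k) + σsq := by
  have h : 0 ≤ ∑ k, if κ k j then 0 else p k * g k j * x k := by
    refine Finset.sum_nonneg fun i _ => ?_
    split
    · exact le_rfl
    · exact mul_nonneg (le_of_lt (mul_pos (hp i) (hg i j))) (hx i)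
  linarith

lemma hSINR_nonneg (hp : ∀ i, 0 < p i) (hg : ∀ i j, 0 < g i j) (hσ : 0 < σsq)
    (κ : Fin n → Fin m → Bool) {x : Fin n → ℝ} (hx : 0 ≤ x) (j : Fin m) :
    0 ≤ hSINR n m p g σsq κ x j :=
  div_nonneg (numer_nonneg hp hg κ j) (le_of_lt (denom_pos hp hg hσ κ hx j))

lemma hSINR_pos (hp : ∀ i, 0 < p i) (hg : ∀ i j, 0 < g i j) (hσ : 0 < σsq)
    (κ : Fin n → Fin m → Bool) {x : Fin n → ℝ} (hx : 0 ≤ x) {j : Fin m}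
    {i₀ : Fin n} (hi₀ : κ i₀ j = true) :
    0 < hSINR n m p g σsq κ x j :=
  div_pos (numer_pos hp hg κ hi₀) (denom_pos hp hg hσ κ hx j)

/-- h is antitone in the load vector (on the nonnegative orthant). -/
lemma hSINR_anti (hp : ∀ i, 0 < p i) (hg : ∀ i j, 0 < g i j) (hσ : 0 < σsq)
    (κ : Fin n → Fin m → Bool) {x y : Fin n → ℝ} (hx : 0 ≤ x) (hxy : x ≤ y)
    (j : Fin m) : hSINR n m p g σsq κ y j ≤ hSINR n m p g σsq κ x j := by
  have hy : (0 : Fin n → ℝ) ≤ y := le_trans hx hxy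
  unfold hSINR
  apply div_le_div_of_nonneg_left (numer_nonneg hp hg κ j) (denom_pos hp hg hσ κ hx j)
  have h : (∑ k, if κ k j then 0 else p k * g k j * x k) ≤
      ∑ k, if κ k j then 0 else p k * g k j * y k := by
    refine Finset.sum_le_sum fun i _ => ?_
    split
    · exact le_rfl
    · exact mul_le_mul_of_nonneg_left (hxy i) (le_of_lt (mul_pos (hp i) (hg i j)))
  linarith

/-- h is monotone in the JT pattern (on the nonnegative orthant). -/
lemma hSINR_pattern_le (hp : ∀ i, 0 < p i) (hg : ∀ i j, 0 < g i j) (hσ : 0 < σsq)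
    {κ κ' : Fin n → Fin m → Bool} (hκ : ∀ i j, κ i j = true → κ' i j = true)
    {x : Fin n → ℝ} (hx : 0 ≤ x) (j : Fin m) :
    hSINR n m p g σsq κ x j ≤ hSINR n m p g σsq κ' x j := by
  unfold hSINR
  have hnum : (∑ i, if κ i j then p i * g i j else 0) ≤
      ∑ i, if κ' i j then p i * g i j else 0 := by
    refine Finset.sum_le_sum fun i _ => ?_
    by_cases h : κ i j = true
    · rw [if_pos h, if_pos (hκ i j h)]
    · rw [if_neg h]
      split
      · exact le_of_lt (mul_pos (hp i) (hg i j))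
      · exact le_rfl
  have hden : (∑ k, if κ' k j then 0 else p k * g k j * x k) ≤
      ∑ k, if κ k j then 0 else p k * g k j * x k := by
    refine Finset.sum_le_sum fun i _ => ?_
    by_cases h : κ i j = true
    · rw [if_pos h, if_pos (hκ i j h)]
    · rw [if_neg h]
      split
      · exact mul_nonneg (le_of_lt (mul_pos (hp i) (hg i j))) (hx i)
      · exact le_rfl
  exact div_le_div₀ (numer_nonneg hp hg κ' j) hnum (denom_pos hp hg hσ κ' hx j)
    (by linarith)

/-- f is nonnegative on nonnegative SINRs. -/
lemma fCell_nonneg (hd : ∀ j, 0 < d j) (κ : Fin n → Fin m → Bool)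
    {γ : Fin m → ℝ} (hγ : ∀ j, 0 ≤ γ j) (i : Fin n) :
    0 ≤ fCell n m d κ γ i := by
  refine Finset.sum_nonneg fun j _ => ?_
  split
  · exact div_nonneg (le_of_lt (hd j)) (Real.logb_nonneg one_lt_two (by linarith [hγ j]))
  · exact le_rfl

/-- f is antitone in the SINRs, provided every SINR that is actually used is positive. -/
lemma fCell_anti (hd : ∀ j, 0 < d j) (κ : Fin n → Fin m → Bool)
    {γ₁ γ₂ : Fin m → ℝ} (hγpos : ∀ i j, κ i j = true → 0 < γ₁ j)
    (hle : ∀ j, γ₁ j ≤ γ₂ j) (i : Fin n) :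
    fCell n m d κ γ₂ i ≤ fCell n m d κ γ₁ i := by
  refine Finset.sum_le_sum fun j _ => ?_
  by_cases h : κ i j = true
  · simp only [h, if_true]
    have h1 : 0 < γ₁ j := hγpos i j h
    have h2 : 0 < Real.logb 2 (1 + γ₁ j) := Real.logb_pos one_lt_two (by linarith)
    have h3 : Real.logb 2 (1 + γ₁ j) ≤ Real.logb 2 (1 + γ₂ j) :=
      Real.logb_le_logb_of_le one_lt_two (by linarith) (by linarith [hle j])
    exact div_le_div_of_nonneg_left (le_of_lt (hd j)) h2 h3
  · simp [h]

/-- Monotonicity of the mixed map f^κf ∘ h^κh on the nonnegative orthant. -/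
lemma comp_mono (hp : ∀ i, 0 < p i) (hg : ∀ i j, 0 < g i j) (hσ : 0 < σsq)
    (hd : ∀ j, 0 < d j) {κf κh : Fin n → Fin m → Bool}
    (hserve : ∀ i j, κf i j = true → κh i j = true)
    {x y : Fin n → ℝ} (hx : 0 ≤ x) (hxy : x ≤ y) (i : Fin n) :
    fCell n m d κf (hSINR n m p g σsq κh x) i ≤
      fCell n m d κf (hSINR n m p g σsq κh y) i := by
  have hy : (0 : Fin n → ℝ) ≤ y := le_trans hx hxy
  refine fCell_anti hd κf (fun i' j' h => ?_) (fun j' => hSINR_anti hp hg hσ κh hx hxy j') i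
  exact hSINR_pos hp hg hσ κh hy (hserve i' j' h)

end Aux

theorem sufficient_condition_load_reduction (n m : ℕ) (p : Fin n → ℝ)
    (g : Fin n → Fin m → ℝ) (σsq : ℝ) (d : Fin m → ℝ)
    (hp : ∀ i, 0 < p i) (hg : ∀ i j, 0 < g i j) (hσ : 0 < σsq)
    (hd : ∀ j, 0 < d j)
    (κ κ' : Fin n → Fin m → Bool) (c : Fin n) (j : Fin m)
    (hflip₀ : κ c j = false) (hflip₁ : κ' c j = true)
    (hsame : ∀ i' j', (i', j') ≠ (c, j) → κ' i' j' = κ i' j')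
    -- x̃ : fixed point of f^κ ∘ h^κ
    (xt : Fin n → ℝ) (hxt0 : 0 ≤ xt) (hxtfix : Φ n m p g σsq d κ xt = xt)
    -- the auxiliary iteration x^(k) = (f^κ ∘ h^{κ'})(x^(k-1)), x^(0) = x̃
    (xs : ℕ → (Fin n → ℝ)) (hxs0 : xs 0 = xt)
    (hxsiter : ∀ t, xs (t + 1) = fCell n m d κ (hSINR n m p g σsq κ' (xs t)))
    -- the sufficient condition at some k ≥ 1
    (k : ℕ) (hk : 1 ≤ k)
    (hcond : fCell n m d κ' (hSINR n m p g σsq κ' (xs k)) c ≤ xs k c)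
    -- x : the (unique) fixed point of f^{κ'} ∘ h^{κ'}
    (x : Fin n → ℝ) (hx0 : 0 ≤ x) (hxfix : Φ n m p g σsq d κ' x = x)
    (huniq : ∀ z : Fin n → ℝ, 0 ≤ z → Φ n m p g σsq d κ' z = z → z = x) :
    x ≤ xt := by
  -- κ ≤ κ' as patterns
  have hκle : ∀ i' j', κ i' j' = true → κ' i' j' = true := by
    intro i' j' h
    by_cases hij : (i', j') = (c, j)
    · rw [Prod.mk.injEq] at hij
      rw [hij.1, hij.2] at h
      rw [hflip₀] at h
      exact absurd h (by simp)
    · rw [hsame i' j' hij, h]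
  -- all iterates are nonnegative
  have hnn : ∀ t, (0 : Fin n → ℝ) ≤ xs t := by
    intro t
    induction t with
    | zero => rw [hxs0]; exact hxt0
    | succ t ih =>
      rw [hxsiter t]
      exact fun i => fCell_nonneg hd κ (fun j' => hSINR_nonneg hp hg hσ κ' ih j') i
  -- the iterates are decreasing
  have hdec : ∀ t, xs (t + 1) ≤ xs t := by
    intro t
    induction t with
    | zero =>
      rw [hxsiter 0, hxs0]
      intro i
      calc fCell n m d κ (hSINR n m p g σsq κ' xt) i
          ≤ fCell n m d κ (hSINR n m p g σsq κ xt) i := by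
            refine fCell_anti hd κ (fun i' j' h => hSINR_pos hp hg hσ κ hxt0 h)
              (fun j' => hSINR_pattern_le hp hg hσ hκle hxt0 j') i
        _ = xt i := by rw [← congrFun hxtfix i]; rfl
    | succ t ih =>
      intro i
      have h1 : fCell n m d κ (hSINR n m p g σsq κ' (xs (t + 1))) i ≤
          fCell n m d κ (hSINR n m p g σsq κ' (xs t)) i :=
        comp_mono hp hg hσ hd hκle (hnn (t + 1)) ih i
      rw [← hxsiter t] at h1
      rw [hxsiter (t + 1)]
      exact h1
  have hchain : ∀ t, xs t ≤ xt := by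
    intro t
    induction t with
    | zero => rw [hxs0]
    | succ t ih => exact le_trans (hdec t) ih
  -- Φ' (xs k) ≤ xs k
  set Φ' : (Fin n → ℝ) → (Fin n → ℝ) := Φ n m p g σsq d κ' with hΦ'
  have hstep : Φ' (xs k) ≤ xs k := by
    intro i
    by_cases hic : i = c
    · rw [hic]; exact hcond
    · have hrow : fCell n m d κ' (hSINR n m p g σsq κ' (xs k)) i =
          fCell n m d κ (hSINR n m p g σsq κ' (xs k)) i := by
        refine Finset.sum_congr rfl fun j' _ => ?_
        rw [hsame i j' (by simp [hic])]
      calc Φ' (xs k) i = fCell n m d κ (hSINR n m p g σsq κ' (xs k)) i := hrow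
        _ = xs (k + 1) i := by rw [hxsiter k]
        _ ≤ xs k i := hdec k i
  -- Knaster–Tarski on the interval [0, xs k]
  haveI : Fact ((0 : Fin n → ℝ) ≤ xs k) := ⟨hnn k⟩
  have hmapsto : ∀ z : Fin n → ℝ, 0 ≤ z → z ≤ xs k → Φ' z ∈ Set.Icc (0 : Fin n → ℝ) (xs k) := by
    intro z hz0 hzk
    constructor
    · exact fun i => fCell_nonneg hd κ' (fun j' => hSINR_nonneg hp hg hσ κ' hz0 j') i
    · intro i
      calc Φ' z i ≤ Φ' (xs k) i := comp_mono hp hg hσ hd (fun _ _ h => h) hz0 hzk i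
        _ ≤ xs k i := hstep i
  let F : Set.Icc (0 : Fin n → ℝ) (xs k) →o Set.Icc (0 : Fin n → ℝ) (xs k) :=
    { toFun := fun z => ⟨Φ' z.1, hmapsto z.1 z.2.1 z.2.2⟩
      monotone' := by
        intro z w hzw
        exact Subtype.mk_le_mk.mpr fun i =>
          comp_mono hp hg hσ hd (fun _ _ h => h) z.2.1 hzw i }
  have hfix : F F.lfp = F.lfp := OrderHom.map_lfp F
  have hzfix : Φ' F.lfp.1 = F.lfp.1 := congrArg Subtype.val hfix
  have hzx : (F.lfp : Fin n → ℝ) = x := huniq F.lfp.1 F.lfp.2.1 hzfix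
  calc x = (F.lfp : Fin n → ℝ) := hzx.symm
    _ ≤ xs k := F.lfp.2.2
    _ ≤ xt := hchain k
end

section
/- For fixed κ with each cell serving at least one UE and each UE not served by all cells, the map x ↦ f^κ ∘ h^κ(x) is monotone: x ≥ x' componentwise implies f^κ∘h^κ(x) ≥ f^κ∘h^κ(x') componentwise. -/
theorem load_coupling_monotone (n m : ℕ) (p : Fin n → ℝ)
    (g : Fin n → Fin m → ℝ) (σsq : ℝ) (d : Fin m → ℝ)
    (hp : ∀ i, 0 < p i) (hg : ∀ i j, 0 < g i j) (hσ : 0 < σsq)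
    (hd : ∀ j, 0 < d j)
    (κ : Fin n → Fin m → Bool)
    (hserve : ∀ i : Fin n, ∃ j : Fin m, κ i j = true)
    (hnotall : ∀ j : Fin m, ∃ i : Fin n, κ i j = false) :
    ∀ x x' : Fin n → ℝ, 0 ≤ x' → x' ≤ x →
      fCell n m d κ (hSINR n m p g σsq κ x') ≤
        fCell n m d κ (hSINR n m p g σsq κ x) := by
  intro x x' hx0 hle
  unfold fCell
  refine fun i => Finset.sum_le_sum fun j _ => ?_
  by_cases hκ : κ i j
  · simp only [hκ, if_true]
    -- numerator positive
    have hN : 0 < ∑ k, if κ k j then p k * g k j else 0 := by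
      refine Finset.sum_pos' (fun k _ => ?_) ⟨i, Finset.mem_univ i, ?_⟩
      · by_cases h : κ k j <;> simp [h]
        exact mul_nonneg (hp k).le (hg k j).le
      · simp [hκ]
        exact mul_pos (hp i) (hg i j)
    -- denominators
    have hD' : 0 < (∑ k, if κ k j then 0 else p k * g k j * x' k) + σsq := by
      have : 0 ≤ ∑ k, if κ k j then 0 else p k * g k j * x' k := by
        refine Finset.sum_nonneg fun k _ => ?_
        by_cases h : κ k j <;> simp [h]
        exact mul_nonneg (mul_nonneg (hp k).le (hg k j).le) (hx0 k)
      linarith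
    have hDD : (∑ k, if κ k j then 0 else p k * g k j * x' k) + σsq ≤
        (∑ k, if κ k j then 0 else p k * g k j * x k) + σsq := by
      have : (∑ k, if κ k j then 0 else p k * g k j * x' k) ≤
          ∑ k, if κ k j then 0 else p k * g k j * x k := by
        refine Finset.sum_le_sum fun k _ => ?_
        by_cases h : κ k j <;> simp [h]
        exact mul_le_mul_of_nonneg_left (hle k)
          (by have := hp k; have := hg k j; positivity)
      linarith
    have hD : 0 < (∑ k, if κ k j then 0 else p k * g k j * x k) + σsq := lt_of_lt_of_le hD' hDD
    -- SINR comparison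
    have hγle : hSINR n m p g σsq κ x j ≤ hSINR n m p g σsq κ x' j := by
      unfold hSINR
      exact div_le_div_of_nonneg_left hN.le hD' hDD
    have hγpos : 0 < hSINR n m p g σsq κ x j := by
      unfold hSINR; exact div_pos hN hD
    have hLpos : 0 < Real.logb 2 (1 + hSINR n m p g σsq κ x j) :=
      Real.logb_pos (by norm_num) (by linarith)
    have hLle : Real.logb 2 (1 + hSINR n m p g σsq κ x j) ≤
        Real.logb 2 (1 + hSINR n m p g σsq κ x' j) :=
      by
        have h1 : (1:ℝ) < 2 := by norm_num
        gcongr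
    exact div_le_div_of_nonneg_left (hd j).le hLpos hLle
  · simp [hκ]
end

section
/- Let g(x) = a / log₂(1 + b/(c·x + σ²)) with a, b, c, σ² > 0. Then g is strictly increasing, concave, and satisfies g(x) ≤ g(0) + g'(0)·x for all x ≥ 0. -/
open Real Set

private lemma log_lb (t : ℝ) (ht : 0 ≤ t) : t / (1 + t) ≤ Real.log (1 + t) := by
  have h1 : (0:ℝ) < 1 + t := by linarith
  have h2 := Real.log_le_sub_one_of_pos (show (0:ℝ) < (1+t)⁻¹ by positivity)
  rw [Real.log_inv] at h2
  have h3 : 1 - (1+t)⁻¹ ≤ Real.log (1+t) := by linarith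
  have h4 : t / (1 + t) = 1 - (1+t)⁻¹ := by field_simp; ring
  linarith

private lemma pade_ineq (t : ℝ) (ht : 0 ≤ t) : 2 * t ≤ (2 + t) * Real.log (1 + t) := by
  set F : ℝ → ℝ := fun t => (2 + t) * Real.log (1 + t) - 2 * t with hF
  have hder : ∀ s : ℝ, 0 ≤ s →
      HasDerivAt F (1 * Real.log (1 + s) + (2 + s) * ((1:ℝ)/(1+s)) - 2 * 1) s := by
    intro s hs
    have h1 : (0:ℝ) < 1 + s := by linarith
    have hid : HasDerivAt (fun x : ℝ => 1 + x) 1 s := (hasDerivAt_id s).const_add 1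
    have hlog : HasDerivAt (fun x : ℝ => Real.log (1 + x)) ((1:ℝ)/(1+s)) s := by
      simpa using hid.log h1.ne'
    have h2 : HasDerivAt (fun x : ℝ => 2 + x) 1 s := (hasDerivAt_id s).const_add 2
    have hmul := h2.mul hlog
    have hlin : HasDerivAt (fun x : ℝ => 2 * x) (2 * 1) s := (hasDerivAt_id s).const_mul 2
    exact hmul.sub hlin
  have hmono : MonotoneOn F (Ici (0:ℝ)) := by
    apply monotoneOn_of_deriv_nonneg (convex_Ici 0)
    · exact fun s hs => ((hder s hs).continuousAt).continuousWithinAt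
    · intro s hs
      rw [interior_Ici] at hs
      have hs' : (0:ℝ) < s := hs
      exact ((hder s hs'.le).differentiableAt).differentiableWithinAt
    · intro s hs
      rw [interior_Ici] at hs
      have hs' : (0:ℝ) < s := hs
      rw [(hder s hs'.le).deriv]
      have h1 : (0:ℝ) < 1 + s := by linarith
      have hA := log_lb s hs'.le
      have h2 : (2 + s) * ((1:ℝ)/(1+s)) = 2 - s/(1+s) := by field_simp; ring
      rw [h2]; linarith
  have h0 : F 0 ≤ F t := hmono (self_mem_Ici) ht ht
  simp only [hF, Real.log_one, add_zero, mul_zero, sub_zero, mul_one] at h0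
  simpa using h0

section main

variable {a b c σsq : ℝ}

private lemma has_deriv_g (ha : 0 < a) (hb : 0 < b) (hc : 0 < c) {x : ℝ}
    (hu : 0 < c * x + σsq) :
    HasDerivAt (fun x : ℝ => a / Real.logb 2 (1 + b / (c * x + σsq)))
      (a * Real.log 2 * (b * c) /
        (((c * x + σsq) * ((c * x + σsq) + b)) *
          (Real.log (1 + b / (c * x + σsq)))^2)) x := by
  have hfeq : (fun x : ℝ => a / Real.logb 2 (1 + b / (c * x + σsq))) =
      (fun x : ℝ => a * Real.log 2 / Real.log (1 + b / (c * x + σsq))) := by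
    funext y
    rw [Real.logb, div_div_eq_mul_div]
  rw [hfeq]
  have hu' : HasDerivAt (fun x : ℝ => c * x + σsq) c x := by
    simpa using ((hasDerivAt_id x).const_mul c).add_const σsq
  have hq : HasDerivAt (fun x : ℝ => b / (c * x + σsq))
      ((0 * (c * x + σsq) - b * c) / (c * x + σsq)^2) x :=
    (hasDerivAt_const x b).div hu' hu.ne'
  have hw : HasDerivAt (fun x : ℝ => 1 + b / (c * x + σsq))
      ((0 * (c * x + σsq) - b * c) / (c * x + σsq)^2) x := hq.const_add 1
  have hwpos : (0:ℝ) < 1 + b / (c * x + σsq) := by positivity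
  have hwgt : (1:ℝ) < 1 + b / (c * x + σsq) := by
    have : 0 < b / (c * x + σsq) := by positivity
    linarith
  have hL : HasDerivAt (fun x : ℝ => Real.log (1 + b / (c * x + σsq)))
      (((0 * (c * x + σsq) - b * c) / (c * x + σsq)^2) / (1 + b / (c * x + σsq))) x :=
    hw.log hwpos.ne'
  have hLpos : 0 < Real.log (1 + b / (c * x + σsq)) := Real.log_pos hwgt
  have hg := (hasDerivAt_const x (a * Real.log 2)).div hL hLpos.ne'
  refine hg.congr_deriv ?_
  set u := c * x + σsq with hu_def
  set L := Real.log (1 + b / u) with hL_def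
  have hune : u ≠ 0 := hu.ne'
  have hubne : u + b ≠ 0 := by positivity
  have hwne : (1:ℝ) + b / u ≠ 0 := hwpos.ne'
  have hLne : L ≠ 0 := hLpos.ne'
  field_simp
  ring

theorem load_component_mono_concave_tangent (a b c σsq : ℝ)
    (ha : 0 < a) (hb : 0 < b) (hc : 0 < c) (hσ : 0 < σsq) :
    StrictMonoOn (fun x : ℝ => a / Real.logb 2 (1 + b / (c * x + σsq)))
        (Set.Ici 0) ∧
      ConcaveOn ℝ (Set.Ici 0)
        (fun x : ℝ => a / Real.logb 2 (1 + b / (c * x + σsq))) ∧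
      ∀ x : ℝ, 0 ≤ x →
        (fun x : ℝ => a / Real.logb 2 (1 + b / (c * x + σsq))) x ≤
          (fun x : ℝ => a / Real.logb 2 (1 + b / (c * x + σsq))) 0 +
            deriv (fun x : ℝ => a / Real.logb 2 (1 + b / (c * x + σsq))) 0 * x := by
  set g : ℝ → ℝ := fun x : ℝ => a / Real.logb 2 (1 + b / (c * x + σsq)) with hg
  set g' : ℝ → ℝ := fun x : ℝ =>
    a * Real.log 2 * (b * c) /
      (((c * x + σsq) * ((c * x + σsq) + b)) * (Real.log (1 + b / (c * x + σsq)))^2) with hg'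
  have hupos : ∀ x : ℝ, 0 ≤ x → 0 < c * x + σsq := fun x hx => by positivity
  have hlog2 : (0:ℝ) < Real.log 2 := Real.log_pos one_lt_two
  have hLpos : ∀ x : ℝ, 0 ≤ x → 0 < Real.log (1 + b / (c * x + σsq)) := by
    intro x hx
    have := hupos x hx
    apply Real.log_pos
    have : 0 < b / (c * x + σsq) := by positivity
    linarith
  have hcont : ContinuousOn g (Ici 0) := fun x hx =>
    ((has_deriv_g ha hb hc (hupos x hx)).continuousAt).continuousWithinAt
  -- strict monotonicity
  have hmono : StrictMonoOn g (Ici 0) := by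
    apply strictMonoOn_of_deriv_pos (convex_Ici 0) hcont
    intro x hx
    rw [interior_Ici] at hx
    have hx' : (0:ℝ) < x := hx
    rw [(has_deriv_g ha hb hc (hupos x hx'.le)).deriv]
    have h1 := hupos x hx'.le
    have h2 := hLpos x hx'.le
    apply div_pos
    · positivity
    · exact mul_pos (mul_pos h1 (by linarith)) (pow_pos h2 2)
  -- concavity
  have hconc : ConcaveOn ℝ (Ici 0) g := by
    apply concaveOn_of_hasDerivWithinAt2_nonpos (f' := g')
      (f'' := fun x : ℝ =>
        (0 * (((c * x + σsq) * ((c * x + σsq) + b)) * (Real.log (1 + b / (c * x + σsq)))^2)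
          - a * Real.log 2 * (b * c) *
            (Real.log (1 + b / (c * x + σsq)) * c *
              ((2 * (c * x + σsq) + b) * Real.log (1 + b / (c * x + σsq)) - 2 * b))) /
        ((((c * x + σsq) * ((c * x + σsq) + b)) * (Real.log (1 + b / (c * x + σsq)))^2))^2)
      (convex_Ici 0) hcont
    · intro x hx
      rw [interior_Ici] at hx
      have hx' : (0:ℝ) < x := hx
      exact ((has_deriv_g ha hb hc (hupos x hx'.le)).hasDerivWithinAt)
    · intro x hx
      rw [interior_Ici] at hx
      have hx' : (0:ℝ) < x := hx
      have hu := hupos x hx'.le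
      have hL := hLpos x hx'.le
      have hwpos : (0:ℝ) < 1 + b / (c * x + σsq) := by positivity
      have hu' : HasDerivAt (fun x : ℝ => c * x + σsq) c x := by
        simpa using ((hasDerivAt_id x).const_mul c).add_const σsq
      have hq : HasDerivAt (fun x : ℝ => b / (c * x + σsq))
          ((0 * (c * x + σsq) - b * c) / (c * x + σsq)^2) x :=
        (hasDerivAt_const x b).div hu' hu.ne'
      have hw : HasDerivAt (fun x : ℝ => 1 + b / (c * x + σsq))
          ((0 * (c * x + σsq) - b * c) / (c * x + σsq)^2) x := hq.const_add 1
      have hLd : HasDerivAt (fun x : ℝ => Real.log (1 + b / (c * x + σsq)))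
          (((0 * (c * x + σsq) - b * c) / (c * x + σsq)^2) / (1 + b / (c * x + σsq))) x :=
        hw.log hwpos.ne'
      have hprod : HasDerivAt (fun x : ℝ => (c * x + σsq) * ((c * x + σsq) + b))
          (c * ((c * x + σsq) + b) + (c * x + σsq) * c) x := hu'.mul (hu'.add_const b)
      have hL2 : HasDerivAt (fun x : ℝ => (Real.log (1 + b / (c * x + σsq)))^2)
          ((2:ℕ) * (Real.log (1 + b / (c * x + σsq)))^1 *
            (((0 * (c * x + σsq) - b * c) / (c * x + σsq)^2) / (1 + b / (c * x + σsq)))) x :=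
        hLd.pow 2
      have hD : HasDerivAt
          (fun x : ℝ => ((c * x + σsq) * ((c * x + σsq) + b)) *
            (Real.log (1 + b / (c * x + σsq)))^2)
          ((c * ((c * x + σsq) + b) + (c * x + σsq) * c) *
              (Real.log (1 + b / (c * x + σsq)))^2 +
            ((c * x + σsq) * ((c * x + σsq) + b)) *
              ((2:ℕ) * (Real.log (1 + b / (c * x + σsq)))^1 *
                (((0 * (c * x + σsq) - b * c) / (c * x + σsq)^2) /
                  (1 + b / (c * x + σsq))))) x := hprod.mul hL2
      have hDne : ((c * x + σsq) * ((c * x + σsq) + b)) *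
          (Real.log (1 + b / (c * x + σsq)))^2 ≠ 0 := by
        have : 0 < ((c * x + σsq) * ((c * x + σsq) + b)) *
            (Real.log (1 + b / (c * x + σsq)))^2 :=
          mul_pos (mul_pos hu (by linarith)) (pow_pos hL 2)
        exact this.ne'
      have hg'd := (hasDerivAt_const x (a * Real.log 2 * (b * c))).div hD hDne
      have heq : (c * ((c * x + σsq) + b) + (c * x + σsq) * c) *
              (Real.log (1 + b / (c * x + σsq)))^2 +
            ((c * x + σsq) * ((c * x + σsq) + b)) *
              ((2:ℕ) * (Real.log (1 + b / (c * x + σsq)))^1 *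
                (((0 * (c * x + σsq) - b * c) / (c * x + σsq)^2) /
                  (1 + b / (c * x + σsq)))) =
          Real.log (1 + b / (c * x + σsq)) * c *
            ((2 * (c * x + σsq) + b) * Real.log (1 + b / (c * x + σsq)) - 2 * b) := by
        set u := c * x + σsq with hu_def
        set L := Real.log (1 + b / u) with hL_def
        have hune : u ≠ 0 := hu.ne'
        have hwne : (1:ℝ) + b / u ≠ 0 := hwpos.ne'
        field_simp
        ring
      rw [heq] at hg'd
      exact hg'd.hasDerivWithinAt
    · intro x hx
      rw [interior_Ici] at hx
      have hx' : (0:ℝ) < x := hx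
      have hu := hupos x hx'.le
      have hL := hLpos x hx'.le
      set u := c * x + σsq with hu_def
      set L := Real.log (1 + b / u) with hL_def
      have key : 2 * b ≤ (2 * u + b) * L := by
        have hB := pade_ineq (b / u) (by positivity)
        have hBL : Real.log (1 + b / u) = L := rfl
        have h1 := mul_le_mul_of_nonneg_right hB hu.le
        calc 2 * b = 2 * (b / u) * u := by field_simp
          _ ≤ (2 + b / u) * Real.log (1 + b / u) * u := h1
          _ = (2 * u + b) * L := by rw [hBL]; field_simp
      have hDpos : 0 < (u * (u + b)) * L^2 :=
        mul_pos (mul_pos hu (by linarith)) (pow_pos hL 2)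
      have hnum : 0 * ((u * (u + b)) * L^2) -
          a * Real.log 2 * (b * c) * (L * c * ((2 * u + b) * L - 2 * b)) ≤ 0 := by
        have h1 : 0 ≤ (2 * u + b) * L - 2 * b := by linarith
        have h2 : 0 ≤ a * Real.log 2 * (b * c) * (L * c * ((2 * u + b) * L - 2 * b)) := by
          apply mul_nonneg (by positivity)
          exact mul_nonneg (mul_nonneg hL.le hc.le) h1
        linarith
      exact div_nonpos_of_nonpos_of_nonneg hnum (by positivity)
  refine ⟨hmono, hconc, ?_⟩
  intro x hx
  rcases eq_or_lt_of_le hx with h | h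
  · simp [← h]
  · have hd0 : DifferentiableAt ℝ g 0 :=
      (has_deriv_g ha hb hc (hupos 0 le_rfl)).differentiableAt
    have hs := hconc.slope_le_deriv (self_mem_Ici) (mem_Ici.2 hx) h hd0
    rw [slope_def_field] at hs
    have hx0 : (0:ℝ) < x - 0 := by linarith
    rw [div_le_iff₀ hx0] at hs
    simp only [sub_zero] at hs
    linarith

end main
end

section
/- Let f : ℝⁿ₊ → ℝⁿ₊₊ be monotone and scalable (a standard interference function) with fixed point x*. Then for any x ≥ 0 with f(x) ≤ x, we have x* ≤ x componentwise. -/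
theorem sif_fixed_point_le_feasible (n : ℕ) (f : (Fin n → ℝ) → (Fin n → ℝ))
    (hpos : ∀ x : Fin n → ℝ, 0 ≤ x → ∀ i, 0 < f x i)
    (hmono : ∀ x y : Fin n → ℝ, 0 ≤ x → 0 ≤ y → x ≤ y → f x ≤ f y)
    (hscal : ∀ x : Fin n → ℝ, 0 ≤ x → ∀ α : ℝ, 1 < α →
      ∀ i, f (α • x) i < α * f x i)
    (hcont : Continuous f)
    (xstar : Fin n → ℝ) (hxstar0 : 0 ≤ xstar) (hfix : f xstar = xstar) :
    ∀ x : Fin n → ℝ, 0 ≤ x → f x ≤ x → xstar ≤ x := by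
  intro x hx0 hfx
  intro i0
  rcases Nat.eq_zero_or_pos n with hn | hn
  · exact absurd i0.2 (by omega)
  have hne : (Finset.univ : Finset (Fin n)).Nonempty := by
    refine ⟨⟨0, hn⟩, Finset.mem_univ _⟩
  have hxpos : ∀ i, 0 < x i := fun i => lt_of_lt_of_le (hpos x hx0 i) (hfx i)
  set β := Finset.univ.sup' hne (fun i => xstar i / x i) with hβdef
  obtain ⟨j, -, hj⟩ := Finset.exists_mem_eq_sup' hne (fun i => xstar i / x i)
  have hle : ∀ i, xstar i / x i ≤ β := fun i =>
    Finset.le_sup' (fun i => xstar i / x i) (Finset.mem_univ i)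
  have hβ0 : 0 ≤ β := le_trans (div_nonneg (hxstar0 j) (hxpos j).le) (hle j)
  have hxsle : ∀ i, xstar i ≤ β * x i := by
    intro i
    have := mul_le_mul_of_nonneg_right (hle i) (hxpos i).le
    rwa [div_mul_cancel₀ _ (hxpos i).ne'] at this
  have hβ1 : β ≤ 1 := by
    by_contra hβ
    push_neg at hβ
    have hβx0 : 0 ≤ β • x := fun i => mul_nonneg hβ0 (hx0 i)
    have h1 : f xstar j ≤ f (β • x) j :=
      hmono xstar (β • x) hxstar0 hβx0 (fun i => hxsle i) j
    have h2 : f (β • x) j < β * f x j := hscal x hx0 β hβ j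
    have h3 : β * f x j ≤ β * x j :=
      mul_le_mul_of_nonneg_left (hfx j) hβ0
    have hjeq : xstar j = β * x j := by
      have : xstar j / x j = β := hj.symm
      exact (div_eq_iff (hxpos j).ne').mp this
    have : xstar j < xstar j := by
      calc xstar j = f xstar j := (congrFun hfix j).symm
        _ ≤ f (β • x) j := h1
        _ < β * f x j := h2
        _ ≤ β * x j := h3
        _ = xstar j := hjeq.symm
    exact lt_irrefl _ this
  calc xstar i0 ≤ β * x i0 := hxsle i0
    _ ≤ 1 * x i0 := mul_le_mul_of_nonneg_right hβ1 (hxpos i0).le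
    _ = x i0 := one_mul _
end

section
/- Let F : ℝ₊ → ℝ₊₊ be strictly increasing, continuous, and scalable (α·F(x) > F(α·x) for α > 1). Then the system x₁ = F(x₂), x₂ = F(x₁) has at most one solution, and any solution satisfies x₁ = x₂ = the fixed point of F∘F (equivalently of F if F has one). -/
theorem cyclic_coupled_system_unique_diagonal (F : ℝ → ℝ)
    (hmono : StrictMonoOn F (Set.Ici 0))
    (hcont : ContinuousOn F (Set.Ici 0))
    (hpos : ∀ x : ℝ, 0 ≤ x → 0 < F x)
    (hscal : ∀ x : ℝ, 0 ≤ x → ∀ α : ℝ, 1 < α → F (α * x) < α * F x) :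
    ∀ x₁ x₂ : ℝ, 0 ≤ x₁ → 0 ≤ x₂ → x₁ = F x₂ → x₂ = F x₁ →
      (∀ y₁ y₂ : ℝ, 0 ≤ y₁ → 0 ≤ y₂ → y₁ = F y₂ → y₂ = F y₁ →
        y₁ = x₁ ∧ y₂ = x₂) ∧ x₁ = x₂ ∧ F (F x₁) = x₁ := by
  -- any solution is diagonal
  have diag : ∀ a b : ℝ, 0 ≤ a → 0 ≤ b → a = F b → b = F a → a = b := by
    intro a b ha hb hab hba
    rcases lt_trichotomy a b with h | h | h
    · have := hmono ha hb h
      rw [← hba, ← hab] at this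
      exact absurd this (not_lt.2 h.le)
    · exact h
    · have := hmono hb ha h
      rw [← hba, ← hab] at this
      exact absurd this (not_lt.2 h.le)
  -- uniqueness of fixed point of F
  have fixuniq : ∀ a b : ℝ, 0 ≤ a → 0 ≤ b → F a = a → F b = b → a = b := by
    have key : ∀ a b : ℝ, 0 ≤ a → 0 ≤ b → F a = a → F b = b → a < b → False := by
      intro a b ha hb hfa hfb hab
      have ha0 : 0 < a := hfa ▸ hpos a ha
      have hα : 1 < b / a := (one_lt_div ha0).2 hab
      have := hscal a ha (b / a) hα
      rw [div_mul_cancel₀ _ ha0.ne', hfa, hfb, div_mul_cancel₀ _ ha0.ne'] at this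
      exact lt_irrefl b this
    intro a b ha hb hfa hfb
    rcases lt_trichotomy a b with h | h | h
    · exact absurd (key a b ha hb hfa hfb h) not_false
    · exact h
    · exact absurd (key b a hb ha hfb hfa h) not_false
  intro x₁ x₂ hx₁ hx₂ h12 h21
  have hxd : x₁ = x₂ := diag x₁ x₂ hx₁ hx₂ h12 h21
  have hfix : F x₁ = x₁ := by rw [← hxd] at h21; exact h21.symm
  refine ⟨?_, hxd, by rw [hfix, hfix]⟩
  intro y₁ y₂ hy₁ hy₂ hy12 hy21
  have hyd : y₁ = y₂ := diag y₁ y₂ hy₁ hy₂ hy12 hy21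
  have hyfix : F y₁ = y₁ := by rw [← hyd] at hy21; exact hy21.symm
  have := fixuniq y₁ x₁ hy₁ hx₁ hyfix hfix
  exact ⟨this, by rw [← hyd, this, hxd]⟩
end
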